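/- The map A ↦ (⌊chol(A)⌋, log D(chol(A))) is a bijection from the set of m×m symmetric positive definite matrices to the product of the space of strictly lower triangular m×m matrices and the space of diagonal m×m matrices; consequently (S_m⁺, d_LC) is isometric to a Euclidean space and hence is a complete separable metric space. -/

import Mathlib

open Matrix

/-- Frobenius norm of a real matrix. -/
noncomputable def frobNorm {m : ℕ} (A : Matrix (Fin m) (Fin m) ℝ) : ℝ :=
  Real.sqrt (∑ i, ∑ j, (A i j) ^ 2)

/-- Strictly lower triangular part of a matrix. -/
def strictLower {m : ℕ} (L : Matrix (Fin m) (Fin m) ℝ) : Matrix (Fin m) (Fin m) ℝ :=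
  Matrix.of fun i j => if j < i then L i j else 0

/-- Diagonal matrix whose entries are the logarithms of the diagonal of `L`. -/
noncomputable def logDiag {m : ℕ} (L : Matrix (Fin m) (Fin m) ℝ) :
    Matrix (Fin m) (Fin m) ℝ :=
  Matrix.diagonal fun i => Real.log (L i i)

/-- The Log-Cholesky distance. -/
noncomputable def dLC {m : ℕ} (chol : Matrix (Fin m) (Fin m) ℝ → Matrix (Fin m) (Fin m) ℝ)
    (A B : Matrix (Fin m) (Fin m) ℝ) : ℝ :=
  Real.sqrt (frobNorm (strictLower (chol A) - strictLower (chol B)) ^ 2 +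
    frobNorm (logDiag (chol A) - logDiag (chol B)) ^ 2)

/-!
Writing `A = L Lᵀ` with `L = chol A`, uniqueness of the Cholesky factor gives `chol (L Lᵀ) = L`
for every lower-triangular `L` with positive diagonal, and on such `L` the map
`L ↦ ⌊L⌋ + log D(L)` is inverted by `P ↦ ⌊P⌋ + exp D(P)`. Hence
`A ↦ ⌊chol A⌋ + log D(chol A)` maps `S_m⁺` bijectively onto the lower-triangular matrices.
As `⌊·⌋` and `D(·)` have disjoint supports, `d_LC` is the Frobenius distance between the images,
so `(S_m⁺, d_LC)` is isometric to a closed subspace of `ℝ^(m×m)`, which is complete and separable.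
-/

section MetricTransfer

variable {α X : Type*} [PseudoMetricSpace X] {f : α → X} {s : Set α}

theorem exists_tendsto_of_isComplete_image (hs : IsComplete (f '' s)) {u : ℕ → α}
    (hu : ∀ k, u k ∈ s)
    (hcauchy : ∀ ε : ℝ, 0 < ε → ∃ N, ∀ p q, N ≤ p → N ≤ q → dist (f (u p)) (f (u q)) < ε) :
    ∃ a ∈ s, ∀ ε : ℝ, 0 < ε → ∃ N, ∀ k, N ≤ k → dist (f (u k)) (f a) < ε := by
  have hC : CauchySeq (f ∘ u) := Metric.cauchySeq_iff.2 fun ε hε => by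
    obtain ⟨N, hN⟩ := hcauchy ε hε
    exact ⟨N, fun p hp q hq => hN p q hp hq⟩
  obtain ⟨_, ⟨a, ha, rfl⟩, hlim⟩ :=
    cauchySeq_tendsto_of_isComplete hs (fun k => Set.mem_image_of_mem f (hu k)) hC
  exact ⟨a, ha, fun ε hε => (Metric.tendsto_atTop.1 hlim ε hε).imp fun N hN k hk => hN k hk⟩

theorem exists_countable_dist_lt_of_isSeparable_image (hs : TopologicalSpace.IsSeparable (f '' s)) :
    ∃ t ⊆ s, t.Countable ∧ ∀ a ∈ s, ∀ ε : ℝ, 0 < ε → ∃ b ∈ t, dist (f a) (f b) < ε := by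
  obtain ⟨D, hDs, hDc, hdense⟩ := hs.exists_countable_dense_subset
  choose g hgs hgf using fun d : D => hDs d.2
  have : Countable D := hDc.to_subtype
  refine ⟨Set.range g, Set.range_subset_iff.2 hgs, Set.countable_range g, fun a ha ε hε => ?_⟩
  obtain ⟨d, hd, hdist⟩ := Metric.mem_closure_iff.1 (hdense (Set.mem_image_of_mem f ha)) ε hε
  exact ⟨g ⟨d, hd⟩, Set.mem_range_self _, by rwa [hgf]⟩

end MetricTransfer

theorem Matrix.PosDef.mul_transpose_self_of_isLowerTriangular {n : Type*} [Fintype n]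
    [LinearOrder n] {L : Matrix n n ℝ} (hL : L.IsLowerTriangular) (hpos : ∀ i, 0 < L i i) :
    (L * Lᵀ).PosDef := by
  have hdet : 0 < L.det := by
    rw [det_of_isLowerTriangular L hL]
    exact Finset.prod_pos fun i _ => hpos i
  have hunit : IsUnit L := (isUnit_iff_isUnit_det L).2 (isUnit_iff_ne_zero.2 hdet.ne')
  simpa [conjTranspose_eq_transpose_of_trivial] using
    PosDef.mul_conjTranspose_self L (vecMul_injective_iff_isUnit.2 hunit)

namespace LogCholesky

variable {m : ℕ}

theorem strictLower_apply_of_le (L : Matrix (Fin m) (Fin m) ℝ) {i j : Fin m} (h : i ≤ j) :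
    strictLower L i j = 0 :=
  if_neg h.not_gt

theorem strictLower_eq_self {L : Matrix (Fin m) (Fin m) ℝ} (hL : ∀ i j, i ≤ j → L i j = 0) :
    strictLower L = L := by
  ext i j
  by_cases h : j < i
  · exact if_pos h
  · rw [strictLower_apply_of_le L (not_lt.1 h), hL i j (not_lt.1 h)]

theorem logDiag_apply_of_ne (L : Matrix (Fin m) (Fin m) ℝ) {i j : Fin m} (h : i ≠ j) :
    logDiag L i j = 0 :=
  diagonal_apply_ne _ h

theorem strictLower_add_diagonal_diag {M : Matrix (Fin m) (Fin m) ℝ} (hM : M.IsLowerTriangular) :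
    strictLower M + diagonal (diag M) = M := by
  ext i j
  rcases lt_trichotomy j i with h | rfl | h
  · simp [strictLower, h, h.ne']
  · simp [strictLower]
  · simp [strictLower, h.ne, h.not_gt, hM h]

theorem frobNorm_nonneg (M : Matrix (Fin m) (Fin m) ℝ) : 0 ≤ frobNorm M :=
  Real.sqrt_nonneg _

theorem frobNorm_sq (M : Matrix (Fin m) (Fin m) ℝ) : frobNorm M ^ 2 = ∑ i, ∑ j, M i j ^ 2 :=
  Real.sq_sqrt (by positivity)

theorem frobNorm_add_sq {P Q : Matrix (Fin m) (Fin m) ℝ} (h : ∀ i j, P i j * Q i j = 0) :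
    frobNorm (P + Q) ^ 2 = frobNorm P ^ 2 + frobNorm Q ^ 2 := by
  simp only [frobNorm_sq, ← Finset.sum_add_distrib]
  refine Finset.sum_congr rfl fun i _ => Finset.sum_congr rfl fun j _ => ?_
  rw [Matrix.add_apply]
  linear_combination 2 * h i j

def toEuclideanEntries (M : Matrix (Fin m) (Fin m) ℝ) : EuclideanSpace ℝ (Fin m × Fin m) :=
  WithLp.toLp 2 fun p => M p.1 p.2

theorem frobNorm_eq_norm_toEuclideanEntries (M : Matrix (Fin m) (Fin m) ℝ) :
    frobNorm M = ‖toEuclideanEntries M‖ := by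
  simp [frobNorm, EuclideanSpace.norm_eq, toEuclideanEntries, Fintype.sum_prod_type]

theorem toEuclideanEntries_sub (M N : Matrix (Fin m) (Fin m) ℝ) :
    toEuclideanEntries (M - N) = toEuclideanEntries M - toEuclideanEntries N :=
  rfl

theorem isClosed_setOf_apply_eq_zero_of_lt :
    IsClosed {x : EuclideanSpace ℝ (Fin m × Fin m) | ∀ i j : Fin m, i < j → x (i, j) = 0} := by
  simp only [Set.ofPred_forall]
  exact isClosed_iInter fun i => isClosed_iInter fun j => isClosed_iInter fun _ =>
    isClosed_eq (by fun_prop) continuous_const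

noncomputable def lowerExp (P Q : Matrix (Fin m) (Fin m) ℝ) : Matrix (Fin m) (Fin m) ℝ :=
  strictLower P + diagonal fun i => Real.exp (Q i i)

theorem lowerExp_isLowerTriangular (P Q : Matrix (Fin m) (Fin m) ℝ) :
    (lowerExp P Q).IsLowerTriangular := fun i j (h : i < j) => by
  simp [lowerExp, strictLower, h.ne, h.not_gt]

theorem lowerExp_apply_self (P Q : Matrix (Fin m) (Fin m) ℝ) (i : Fin m) :
    lowerExp P Q i i = Real.exp (Q i i) := by
  simp [lowerExp, strictLower]

theorem lowerExp_apply_self_pos (P Q : Matrix (Fin m) (Fin m) ℝ) (i : Fin m) :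
    0 < lowerExp P Q i i :=
  (lowerExp_apply_self P Q i).symm ▸ Real.exp_pos _

theorem strictLower_lowerExp (P Q : Matrix (Fin m) (Fin m) ℝ) :
    strictLower (lowerExp P Q) = strictLower P := by
  ext i j
  by_cases h : j < i
  · simp [lowerExp, strictLower, h, h.ne']
  · simp [strictLower, h]

theorem logDiag_lowerExp (P Q : Matrix (Fin m) (Fin m) ℝ) :
    logDiag (lowerExp P Q) = diagonal (diag Q) := by
  ext i j
  simp [logDiag, lowerExp_apply_self, diagonal_apply]

theorem lowerExp_strictLower_logDiag {L : Matrix (Fin m) (Fin m) ℝ} (hL : L.IsLowerTriangular)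
    (hpos : ∀ i, 0 < L i i) : lowerExp (strictLower L) (logDiag L) = L := by
  ext i j
  rcases lt_trichotomy j i with h | rfl | h
  · simp [lowerExp, strictLower, h, h.ne']
  · simp [lowerExp, strictLower, logDiag, Real.exp_log (hpos _)]
  · simp [lowerExp, strictLower, h.ne, h.not_gt, hL h]

noncomputable def logChol (L : Matrix (Fin m) (Fin m) ℝ) : Matrix (Fin m) (Fin m) ℝ :=
  strictLower L + logDiag L

theorem logChol_isLowerTriangular (L : Matrix (Fin m) (Fin m) ℝ) :
    (logChol L).IsLowerTriangular := fun i j (h : i < j) => by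
  rw [logChol, Matrix.add_apply, strictLower_apply_of_le L h.le, logDiag_apply_of_ne L h.ne,
    add_zero]

section Cholesky

variable (chol : Matrix (Fin m) (Fin m) ℝ → Matrix (Fin m) (Fin m) ℝ)

noncomputable def logCholeskyCoords (A : Matrix (Fin m) (Fin m) ℝ) :
    Matrix (Fin m) (Fin m) ℝ × Matrix (Fin m) (Fin m) ℝ :=
  (strictLower (chol A), logDiag (chol A))

theorem chol_mul_transpose_self
    (huniq : ∀ A : Matrix (Fin m) (Fin m) ℝ, A.PosDef →
      ∀ L : Matrix (Fin m) (Fin m) ℝ, (∀ i j, i < j → L i j = 0) → (∀ i, 0 < L i i) →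
        A = L * Lᵀ → L = chol A)
    {L : Matrix (Fin m) (Fin m) ℝ} (hL : L.IsLowerTriangular) (hpos : ∀ i, 0 < L i i) :
    chol (L * Lᵀ) = L :=
  (huniq _ (PosDef.mul_transpose_self_of_isLowerTriangular hL hpos) L (fun _ _ h => hL h) hpos
    rfl).symm

theorem mapsTo_logCholeskyCoords (s : Set (Matrix (Fin m) (Fin m) ℝ)) :
    Set.MapsTo (logCholeskyCoords chol) s
      ({L | ∀ i j : Fin m, i ≤ j → L i j = 0} ×ˢ {D | ∀ i j : Fin m, i ≠ j → D i j = 0}) :=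
  fun _ _ => ⟨fun _ _ h => strictLower_apply_of_le _ h, fun _ _ h => logDiag_apply_of_ne _ h⟩

theorem injOn_logCholeskyCoords
    (hlow : ∀ A : Matrix (Fin m) (Fin m) ℝ, A.PosDef → ∀ i j, i < j → chol A i j = 0)
    (hdiag : ∀ A : Matrix (Fin m) (Fin m) ℝ, A.PosDef → ∀ i, 0 < chol A i i)
    (hfact : ∀ A : Matrix (Fin m) (Fin m) ℝ, A.PosDef → A = chol A * (chol A)ᵀ) :
    Set.InjOn (logCholeskyCoords chol) {A | A.PosDef} := by
  intro A hA B hB hAB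
  have hchol : chol A = chol B := calc
    chol A = lowerExp (strictLower (chol A)) (logDiag (chol A)) :=
      (lowerExp_strictLower_logDiag (fun _ _ h => hlow A hA _ _ h) (hdiag A hA)).symm
    _ = lowerExp (strictLower (chol B)) (logDiag (chol B)) :=
      congrArg₂ lowerExp (congrArg Prod.fst hAB) (congrArg Prod.snd hAB)
    _ = chol B := lowerExp_strictLower_logDiag (fun _ _ h => hlow B hB _ _ h) (hdiag B hB)
  rw [hfact A hA, hfact B hB, hchol]

theorem surjOn_logCholeskyCoords
    (huniq : ∀ A : Matrix (Fin m) (Fin m) ℝ, A.PosDef →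
      ∀ L : Matrix (Fin m) (Fin m) ℝ, (∀ i j, i < j → L i j = 0) → (∀ i, 0 < L i i) →
        A = L * Lᵀ → L = chol A) :
    Set.SurjOn (logCholeskyCoords chol) {A | A.PosDef}
      ({L | ∀ i j : Fin m, i ≤ j → L i j = 0} ×ˢ {D | ∀ i j : Fin m, i ≠ j → D i j = 0}) := by
  rintro ⟨P, Q⟩ ⟨hP, hQ⟩
  have hL := lowerExp_isLowerTriangular P Q
  have hpos := lowerExp_apply_self_pos P Q
  refine ⟨_, PosDef.mul_transpose_self_of_isLowerTriangular hL hpos, ?_⟩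
  rw [logCholeskyCoords, chol_mul_transpose_self chol huniq hL hpos, strictLower_lowerExp,
    logDiag_lowerExp, strictLower_eq_self hP, IsDiag.diagonal_diag fun i j h => hQ i j h]

theorem exists_posDef_logChol_chol_eq
    (huniq : ∀ A : Matrix (Fin m) (Fin m) ℝ, A.PosDef →
      ∀ L : Matrix (Fin m) (Fin m) ℝ, (∀ i j, i < j → L i j = 0) → (∀ i, 0 < L i i) →
        A = L * Lᵀ → L = chol A)
    {M : Matrix (Fin m) (Fin m) ℝ} (hM : M.IsLowerTriangular) :
    ∃ A : Matrix (Fin m) (Fin m) ℝ, A.PosDef ∧ logChol (chol A) = M := by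
  have hL := lowerExp_isLowerTriangular M M
  have hpos := lowerExp_apply_self_pos M M
  refine ⟨_, PosDef.mul_transpose_self_of_isLowerTriangular hL hpos, ?_⟩
  rw [chol_mul_transpose_self chol huniq hL hpos, logChol, strictLower_lowerExp, logDiag_lowerExp,
    strictLower_add_diagonal_diag hM]

theorem dLC_eq_frobNorm_sub (A B : Matrix (Fin m) (Fin m) ℝ) :
    dLC chol A B = frobNorm (logChol (chol A) - logChol (chol B)) := by
  have hdisjoint : ∀ i j, (strictLower (chol A) - strictLower (chol B)) i j *
      (logDiag (chol A) - logDiag (chol B)) i j = 0 := fun i j => by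
    rcases lt_or_ge j i with h | h
    · simp [logDiag_apply_of_ne _ h.ne']
    · simp [strictLower_apply_of_le _ h]
  rw [dLC, ← frobNorm_add_sq hdisjoint, Real.sqrt_sq (frobNorm_nonneg _), logChol, logChol,
    add_sub_add_comm]

noncomputable def logCholeskyEmbedding (A : Matrix (Fin m) (Fin m) ℝ) :
    EuclideanSpace ℝ (Fin m × Fin m) :=
  toEuclideanEntries (logChol (chol A))

theorem dLC_eq_dist (A B : Matrix (Fin m) (Fin m) ℝ) :
    dLC chol A B = dist (logCholeskyEmbedding chol A) (logCholeskyEmbedding chol B) := by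
  rw [dLC_eq_frobNorm_sub, frobNorm_eq_norm_toEuclideanEntries, toEuclideanEntries_sub,
    dist_eq_norm, logCholeskyEmbedding, logCholeskyEmbedding]

theorem image_logCholeskyEmbedding
    (huniq : ∀ A : Matrix (Fin m) (Fin m) ℝ, A.PosDef →
      ∀ L : Matrix (Fin m) (Fin m) ℝ, (∀ i j, i < j → L i j = 0) → (∀ i, 0 < L i i) →
        A = L * Lᵀ → L = chol A) :
    logCholeskyEmbedding chol '' {A | A.PosDef} =
      {x | ∀ i j : Fin m, i < j → x (i, j) = 0} := by
  ext x
  constructor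
  · rintro ⟨A, -, rfl⟩ i j h
    exact logChol_isLowerTriangular (chol A) h
  · intro hx
    obtain ⟨A, hA, hAx⟩ := exists_posDef_logChol_chol_eq chol huniq
      (M := Matrix.of fun i j => x (i, j)) fun i j h => hx i j h
    exact ⟨A, hA, by rw [logCholeskyEmbedding, hAx]; rfl⟩

end Cholesky

end LogCholesky

open LogCholesky in
/-- The map `A ↦ (⌊chol A⌋, log D(chol A))` is a bijection from the SPD matrices
onto (strictly lower triangular) × (diagonal) matrices, it is an isometry from
`(S_m⁺, d_LC)` onto that Euclidean space, and consequently `(S_m⁺, d_LC)` is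
complete and separable.  Here `chol` is the (unique) Cholesky factorization map. -/
theorem log_cholesky_bijection_isometry {m : ℕ}
    (chol : Matrix (Fin m) (Fin m) ℝ → Matrix (Fin m) (Fin m) ℝ)
    (hlow : ∀ A : Matrix (Fin m) (Fin m) ℝ, A.PosDef → ∀ i j, i < j → chol A i j = 0)
    (hdiag : ∀ A : Matrix (Fin m) (Fin m) ℝ, A.PosDef → ∀ i, 0 < chol A i i)
    (hfact : ∀ A : Matrix (Fin m) (Fin m) ℝ, A.PosDef → A = chol A * (chol A)ᵀ)
    (huniq : ∀ A : Matrix (Fin m) (Fin m) ℝ, A.PosDef →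
      ∀ L : Matrix (Fin m) (Fin m) ℝ, (∀ i j, i < j → L i j = 0) → (∀ i, 0 < L i i) →
        A = L * Lᵀ → L = chol A) :
    -- bijection onto strictly-lower-triangular × diagonal matrices
    Set.BijOn (fun A => (strictLower (chol A), logDiag (chol A)))
      {A : Matrix (Fin m) (Fin m) ℝ | A.PosDef}
      ({L : Matrix (Fin m) (Fin m) ℝ | ∀ i j : Fin m, i ≤ j → L i j = 0} ×ˢ
        {D : Matrix (Fin m) (Fin m) ℝ | ∀ i j : Fin m, i ≠ j → D i j = 0}) ∧
    -- the map is an isometry onto the Euclidean (Frobenius) product space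
    (∀ A B : Matrix (Fin m) (Fin m) ℝ, A.PosDef → B.PosDef →
      dLC chol A B = Real.sqrt (frobNorm (strictLower (chol A) - strictLower (chol B)) ^ 2 +
        frobNorm (logDiag (chol A) - logDiag (chol B)) ^ 2)) ∧
    -- completeness of (S_m⁺, d_LC)
    (∀ f : ℕ → Matrix (Fin m) (Fin m) ℝ, (∀ k, (f k).PosDef) →
      (∀ ε : ℝ, 0 < ε → ∃ N, ∀ p q, N ≤ p → N ≤ q → dLC chol (f p) (f q) < ε) →
      ∃ A : Matrix (Fin m) (Fin m) ℝ, A.PosDef ∧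
        ∀ ε : ℝ, 0 < ε → ∃ N, ∀ k, N ≤ k → dLC chol (f k) A < ε) ∧
    -- separability of (S_m⁺, d_LC)
    (∃ s : Set (Matrix (Fin m) (Fin m) ℝ), s.Countable ∧ (∀ B ∈ s, B.PosDef) ∧
      ∀ A : Matrix (Fin m) (Fin m) ℝ, A.PosDef → ∀ ε : ℝ, 0 < ε →
        ∃ B ∈ s, dLC chol A B < ε) := by
  have himage := image_logCholeskyEmbedding chol huniq
  refine ⟨⟨mapsTo_logCholeskyCoords chol _, injOn_logCholeskyCoords chol hlow hdiag hfact,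
    surjOn_logCholeskyCoords chol huniq⟩, fun _ _ _ _ => rfl, ?_, ?_⟩
  · intro f hf hcauchy
    simp only [dLC_eq_dist] at hcauchy ⊢
    exact exists_tendsto_of_isComplete_image
      (himage ▸ isClosed_setOf_apply_eq_zero_of_lt.isComplete) hf hcauchy
  · simp only [dLC_eq_dist]
    obtain ⟨t, hts, htc, hdense⟩ := exists_countable_dist_lt_of_isSeparable_image
      (.of_separableSpace (logCholeskyEmbedding chol '' {A | A.PosDef}))
    exact ⟨t, htc, hts, hdense⟩
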